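/- Let α > 0 and m ∈ ℕ. Then for every v' ∈ (0,1): Σ_{z=0}^{m} [∫₀¹ α(1−v)^{α−1} · (m!/(z!(m−z)!)) v^z (1−v)^{m−z} dv] · [Γ(α+m+1)/(Γ(z+1)Γ(α+m−z))] v'^{z} (1−v')^{α+m−z−1} = α (1−v')^{α−1}. That is, if v ~ Beta(1,α), z | v ~ Binomial(m, v) and v' | z ~ Beta(1+z, α+m−z), then marginally v' ~ Beta(1,α); the Beta(1,α) law is invariant under the latent-binomial transition of the time-series dependent Dirichlet process, so that each un-normalised stick-breaking weight v_{i,t} is marginally Beta(1,α) at every time t. -/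

import Mathlib

open MeasureTheory Finset

/-- Real Beta integral with natural first exponent. -/
lemma real_beta_nat (z : ℕ) {β : ℝ} (hβ : 0 < β) :
    ∫ x in (0:ℝ)..1, x ^ z * (1 - x) ^ (β - 1)
      = Real.Gamma (z + 1) * Real.Gamma β / Real.Gamma ((z : ℝ) + 1 + β) := by
  have hs : (0:ℝ) < (z:ℝ) + 1 := by positivity
  have key := Complex.Gamma_mul_Gamma_eq_betaIntegral
    (s := ((z:ℝ) + 1 : ℝ)) (t := (β : ℂ)) (by simpa using hs) (by simpa using hβ)
  have hG : Complex.Gamma (((z:ℝ) + 1 : ℝ) + β) = (Real.Gamma ((z:ℝ) + 1 + β) : ℂ) := by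
    rw [← Complex.ofReal_add, Complex.Gamma_ofReal]
  have hbeta : Complex.betaIntegral (((z:ℝ) + 1 : ℝ)) (β : ℂ)
      = ((∫ x in (0:ℝ)..1, x ^ z * (1 - x) ^ (β - 1) : ℝ) : ℂ) := by
    rw [Complex.betaIntegral, ← intervalIntegral.integral_ofReal]
    apply intervalIntegral.integral_congr
    intro x hx
    rw [Set.uIcc_of_le (by norm_num)] at hx
    obtain ⟨hx0, hx1⟩ := hx
    push_cast
    rw [show ((z:ℂ) + 1 - 1) = (z : ℂ) by ring, Complex.cpow_natCast,
      show ((β:ℂ) - 1) = ((β - 1 : ℝ) : ℂ) by push_cast; ring,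
      show ((1:ℂ) - (x:ℂ)) = ((1 - x : ℝ) : ℂ) by push_cast; ring,
      ← Complex.ofReal_cpow (by linarith), ← Complex.ofReal_pow, ← Complex.ofReal_mul]
  rw [hbeta, hG, Complex.Gamma_ofReal, Complex.Gamma_ofReal] at key
  have key2 : (Real.Gamma ((z:ℝ)+1) * Real.Gamma β : ℝ) =
      (Real.Gamma ((z:ℝ)+1+β) * ∫ x in (0:ℝ)..1, x ^ z * (1 - x) ^ (β - 1) : ℝ) := by
    exact_mod_cast key
  have hGpos : 0 < Real.Gamma ((z:ℝ)+1+β) := Real.Gamma_pos_of_pos (by linarith)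
  field_simp at key2 ⊢
  linarith [key2]

/-- Invariance of the `Beta(1,α)` law under the latent-binomial transition of
the time-series dependent Dirichlet process: if `v ~ Be(1,α)`,
`z | v ~ Bin(m, v)` and `v' | z ~ Be(1+z, α+m-z)`, then marginally
`v' ~ Be(1,α)`. -/
theorem tsDDP_beta_invariance (α : ℝ) (hα : 0 < α) (m : ℕ)
    (v' : ℝ) (hv' : v' ∈ Set.Ioo (0 : ℝ) 1) :
    ∑ z ∈ Finset.range (m + 1),
      (∫ v in Set.Ioo (0 : ℝ) 1,
        α * (1 - v) ^ (α - 1) *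
          ((m.factorial : ℝ) / (z.factorial * (m - z).factorial)) *
          v ^ z * (1 - v) ^ (m - z)) *
      (Real.Gamma (α + m + 1) /
        (Real.Gamma ((z : ℝ) + 1) * Real.Gamma (α + m - z))) *
      v' ^ z * (1 - v') ^ (α + (m : ℝ) - z - 1)
    = α * (1 - v') ^ (α - 1) := by
  obtain ⟨hv'0, hv'1⟩ := hv'
  have h1v' : (0:ℝ) < 1 - v' := by linarith
  have hmain : ∀ z ∈ Finset.range (m + 1),
      (∫ v in Set.Ioo (0 : ℝ) 1,
        α * (1 - v) ^ (α - 1) *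
          ((m.factorial : ℝ) / (z.factorial * (m - z).factorial)) *
          v ^ z * (1 - v) ^ (m - z)) *
      (Real.Gamma (α + m + 1) /
        (Real.Gamma ((z : ℝ) + 1) * Real.Gamma (α + m - z))) *
      v' ^ z * (1 - v') ^ (α + (m : ℝ) - z - 1)
      = α * (1 - v') ^ (α - 1) * (v' ^ z * (1 - v') ^ (m - z) * (m.choose z : ℝ)) := by
    intro z hzr
    have hz : z ≤ m := Nat.lt_succ_iff.mp (Finset.mem_range.mp hzr)
    have hcast : ((m - z : ℕ) : ℝ) = (m : ℝ) - z := Nat.cast_sub hz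
    set C : ℝ := (m.factorial : ℝ) / (z.factorial * (m - z).factorial) with hC
    set β : ℝ := α + (m : ℝ) - z with hβ
    have hβpos : 0 < β := by
      have h : (0:ℝ) ≤ ((m - z : ℕ) : ℝ) := Nat.cast_nonneg _
      rw [hcast] at h
      rw [hβ]; linarith
    -- compute the integral
    have hint : (∫ v in Set.Ioo (0 : ℝ) 1,
        α * (1 - v) ^ (α - 1) * C * v ^ z * (1 - v) ^ (m - z))
        = α * C * (Real.Gamma ((z:ℝ) + 1) * Real.Gamma β / Real.Gamma ((z:ℝ) + 1 + β)) := by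
      have hcongr : ∀ v ∈ Set.Ioo (0:ℝ) 1,
          α * (1 - v) ^ (α - 1) * C * v ^ z * (1 - v) ^ (m - z)
          = α * C * (v ^ z * (1 - v) ^ (β - 1)) := by
        intro v hv
        have h1v : (0:ℝ) < 1 - v := by linarith [hv.2]
        have h2 : (1 - v) ^ (α - 1) * (1 - v) ^ ((m - z : ℕ) : ℝ) = (1 - v) ^ (β - 1) := by
          rw [← Real.rpow_add h1v]
          congr 1
          rw [hcast, hβ]; ring
        calc α * (1 - v) ^ (α - 1) * C * v ^ z * (1 - v) ^ (m - z)
            = α * C * (v ^ z * ((1 - v) ^ (α - 1) * (1 - v) ^ ((m - z : ℕ) : ℝ))) := by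
              rw [Real.rpow_natCast]; ring
          _ = α * C * (v ^ z * (1 - v) ^ (β - 1)) := by rw [h2]
      rw [MeasureTheory.setIntegral_congr_fun measurableSet_Ioo hcongr,
        MeasureTheory.integral_const_mul, ← MeasureTheory.integral_Ioc_eq_integral_Ioo,
        ← intervalIntegral.integral_of_le (by norm_num : (0:ℝ) ≤ 1),
        real_beta_nat z hβpos]
    rw [hint]
    -- Gamma positivity for cancellation
    have hG1 : 0 < Real.Gamma ((z:ℝ) + 1) := Real.Gamma_pos_of_pos (by positivity)
    have hG2 : 0 < Real.Gamma β := Real.Gamma_pos_of_pos hβpos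
    have hG3 : Real.Gamma ((z:ℝ) + 1 + β) = Real.Gamma (α + m + 1) := by
      congr 1; rw [hβ]; ring
    have hG4 : Real.Gamma (α + m - z) = Real.Gamma β := by congr 1
    have hG5 : 0 < Real.Gamma (α + m + 1) := by
      rw [← hG3]; exact Real.Gamma_pos_of_pos (by positivity)
    rw [hG3, hG4]
    -- split the rpow of v'
    have hsplit : (1 - v') ^ (α + (m : ℝ) - z - 1)
        = (1 - v') ^ (α - 1) * (1 - v') ^ (m - z) := by
      rw [← Real.rpow_natCast (1 - v') (m - z), ← Real.rpow_add h1v', hcast]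
      congr 1; ring
    rw [hsplit]
    have hCchoose : C = (m.choose z : ℝ) := (Nat.cast_choose ℝ hz).symm
    rw [hCchoose]
    field_simp
  rw [Finset.sum_congr rfl hmain, ← Finset.mul_sum]
  have hsum : ∑ z ∈ Finset.range (m + 1), v' ^ z * (1 - v') ^ (m - z) * (m.choose z : ℝ) = 1 := by
    rw [← add_pow]
    norm_num
  rw [hsum, mul_one]
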